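/- arXiv:2603.20202 — 2 statements merged into one kernel-verified Lean document; each statement's English description precedes it below -/
import Mathlib

section
/- Graded version of Baer's criterion: Let Γ be a cancellation monoid and M a Γ-graded left R-module over a Γ-graded ring R. Then M is gr-injective if and only if for every homogeneous left ideal I of R, every α ∈ Γ, and every homogeneous homomorphism f: I → M of degree α, there exists m_α ∈ M_α such that f(r) = r·m_α for all r ∈ I. -/
/-!
(⇒) Shifting the gradings of `I ⊆ R` by `α` turns `f` into a degree-preserving map, which
gr-injectivity extends to a homogeneous `h : R → M`. The cancellation law forces `1 ∈ R₀`, so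
`m = h 1 ∈ M_α` and `f r = h (r • 1) = r • m`.

(⇐) Given a homogeneous monomorphism `g : A → B` and a homogeneous `f : A → M`, apply Zorn's lemma
to the homogeneous partial extensions of `f` along `g`, encoded as graded submodules of `B × M`
that are graphs. If the domain of a maximal one missed a homogeneous `y ∈ B_γ`, the ideal
`I = {r | r • y ∈ dom G}` would be homogeneous and `r ↦ G (r • y)` of degree `γ`; the Baer
condition gives `m ∈ M_γ` with `G (r • y) = r • m`, so adjoining `(y, m)` would enlarge `G`.
-/

namespace GradedPaper

open DirectSum

section Defs

variable {Γ : Type} [DecidableEq Γ] [AddCancelMonoid Γ]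

section RingDefs

variable {R : Type} [Ring R]

/-- The grading of a module is compatible with the grading of the ring. -/
def SMulClosed (𝒜 : Γ → AddSubgroup R) {M : Type} [AddCommGroup M] [Module R M]
    (ℳ : Γ → AddSubgroup M) : Prop :=
  ∀ ⦃i j : Γ⦄ ⦃a : R⦄ ⦃m : M⦄, a ∈ 𝒜 i → m ∈ ℳ j → a • m ∈ ℳ (i + j)

/-- The multiplicative condition `R_α R_β ⊆ R_{αβ}` of a graded ring. -/
def MulClosed (𝒜 : Γ → AddSubgroup R) : Prop :=
  ∀ ⦃i j : Γ⦄ ⦃a b : R⦄, a ∈ 𝒜 i → b ∈ 𝒜 j → a * b ∈ 𝒜 (i + j)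

/-- A homogeneous (degree-preserving) homomorphism of graded modules. -/
def IsHomogeneousHom {M N : Type} [AddCommGroup M] [Module R M]
    [AddCommGroup N] [Module R N]
    (ℳ : Γ → AddSubgroup M) (𝒩 : Γ → AddSubgroup N) (f : M →ₗ[R] N) : Prop :=
  ∀ i : Γ, ∀ x ∈ ℳ i, f x ∈ 𝒩 i

/-- A homogeneous homomorphism of degree `d`. -/
def IsHomogeneousOfDeg {M N : Type} [AddCommGroup M] [Module R M]
    [AddCommGroup N] [Module R N]
    (ℳ : Γ → AddSubgroup M) (𝒩 : Γ → AddSubgroup N) (d : Γ) (f : M →ₗ[R] N) : Prop :=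
  ∀ i : Γ, ∀ x ∈ ℳ i, f x ∈ 𝒩 (i + d)

/-- A submodule is graded if it contains the homogeneous components of its elements. -/
def IsGradedSubmodule {M : Type} [AddCommGroup M] [Module R M]
    (ℳ : Γ → AddSubgroup M) [DirectSum.Decomposition ℳ] (N : Submodule R M) : Prop :=
  ∀ x ∈ N, ∀ i : Γ, (DirectSum.decompose ℳ x i : M) ∈ N

/-- The induced grading on a submodule. -/
def subGrading {M : Type} [AddCommGroup M] [Module R M]
    (ℳ : Γ → AddSubgroup M) (N : Submodule R M) : Γ → AddSubgroup ↥N :=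
  fun i => AddSubgroup.comap (N.subtype.toAddMonoidHom) (ℳ i)

/-- The induced grading on a quotient module. -/
def quotGrading {M : Type} [AddCommGroup M] [Module R M]
    (ℳ : Γ → AddSubgroup M) (N : Submodule R M) : Γ → AddSubgroup (M ⧸ N) :=
  fun i => AddSubgroup.map (N.mkQ).toAddMonoidHom (ℳ i)

/-- A graded module is gr-free if it has a basis of homogeneous elements. -/
def IsGrFree {F : Type} [AddCommGroup F] [Module R F] (ℱ : Γ → AddSubgroup F) : Prop :=
  ∃ (ι : Type) (b : Module.Basis ι R F), ∀ j : ι, ∃ i : Γ, b j ∈ ℱ i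

/-- Finitely generated gr-free. -/
def IsGrFreeFin {F : Type} [AddCommGroup F] [Module R F] (ℱ : Γ → AddSubgroup F) : Prop :=
  ∃ (n : ℕ) (b : Module.Basis (Fin n) R F), ∀ j : Fin n, ∃ i : Γ, b j ∈ ℱ i

/-- Gr-projective: homogeneous lifting property against homogeneous epimorphisms. -/
def IsGrProjective (𝒜 : Γ → AddSubgroup R) {P : Type} [AddCommGroup P] [Module R P]
    (𝒬 : Γ → AddSubgroup P) : Prop :=
  ∀ (M N : Type) [AddCommGroup M] [Module R M] [AddCommGroup N] [Module R N]
    (ℳ : Γ → AddSubgroup M) (𝒩 : Γ → AddSubgroup N)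
    [DirectSum.Decomposition ℳ] [DirectSum.Decomposition 𝒩],
    SMulClosed 𝒜 ℳ → SMulClosed 𝒜 𝒩 →
    ∀ (g : M →ₗ[R] N), IsHomogeneousHom ℳ 𝒩 g → Function.Surjective g →
    ∀ (f : P →ₗ[R] N), IsHomogeneousHom 𝒬 𝒩 f →
    ∃ h : P →ₗ[R] M, IsHomogeneousHom 𝒬 ℳ h ∧ g ∘ₗ h = f

/-- Gr-injective: homogeneous extension property against homogeneous monomorphisms. -/
def IsGrInjective (𝒜 : Γ → AddSubgroup R) {E : Type} [AddCommGroup E] [Module R E]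
    (ℰ : Γ → AddSubgroup E) : Prop :=
  ∀ (M N : Type) [AddCommGroup M] [Module R M] [AddCommGroup N] [Module R N]
    (ℳ : Γ → AddSubgroup M) (𝒩 : Γ → AddSubgroup N)
    [DirectSum.Decomposition ℳ] [DirectSum.Decomposition 𝒩],
    SMulClosed 𝒜 ℳ → SMulClosed 𝒜 𝒩 →
    ∀ (g : M →ₗ[R] N), IsHomogeneousHom ℳ 𝒩 g → Function.Injective g →
    ∀ (f : M →ₗ[R] E), IsHomogeneousHom ℳ ℰ f →
    ∃ h : N →ₗ[R] E, IsHomogeneousHom 𝒩 ℰ h ∧ h ∘ₗ g = f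

/-- A right nonzero divisor. -/
def IsRightNonZeroDivisor (r : R) : Prop := r ≠ 0 ∧ ∀ b : R, b * r = 0 → b = 0

/-- Gr-divisible graded module. -/
def IsGrDivisible (𝒜 : Γ → AddSubgroup R) {M : Type} [AddCommGroup M] [Module R M]
    (ℳ : Γ → AddSubgroup M) : Prop :=
  ∀ (i j k : Γ), i + k = j → ∀ r ∈ 𝒜 i, IsRightNonZeroDivisor r →
    ∀ y ∈ ℳ j, ∃ x ∈ ℳ k, r • x = y

/-- Graded isomorphism of graded modules. -/
def GrIso {M N : Type} [AddCommGroup M] [Module R M] [AddCommGroup N] [Module R N]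
    (ℳ : Γ → AddSubgroup M) (𝒩 : Γ → AddSubgroup N) : Prop :=
  ∃ e : M ≃ₗ[R] N, IsHomogeneousHom ℳ 𝒩 e.toLinearMap ∧
    IsHomogeneousHom 𝒩 ℳ e.symm.toLinearMap

/-- Graded left hereditary ring: every homogeneous left ideal is gr-projective. -/
def GrLeftHereditary (𝒜 : Γ → AddSubgroup R) [DirectSum.Decomposition 𝒜] : Prop :=
  ∀ I : Submodule R R, IsGradedSubmodule 𝒜 I → IsGrProjective 𝒜 (subGrading 𝒜 I)

/-- Graded left semihereditary ring: every finitely generated homogeneous left ideal is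
gr-projective. -/
def GrLeftSemihereditary (𝒜 : Γ → AddSubgroup R) [DirectSum.Decomposition 𝒜] : Prop :=
  ∀ I : Submodule R R, IsGradedSubmodule 𝒜 I → I.FG → IsGrProjective 𝒜 (subGrading 𝒜 I)

/-- The natural grading on a direct limit of graded modules. -/
noncomputable def limGrading {ι : Type} [Preorder ι] [DecidableEq ι] (F : ι → Type)
    [∀ i, AddCommGroup (F i)] [∀ i, Module R (F i)]
    (ℱ : ∀ i, Γ → AddSubgroup (F i))
    (t : ∀ i j, i ≤ j → F i →ₗ[R] F j) : Γ → AddSubgroup (Module.DirectLimit F t) :=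
  fun γ => ⨆ i, (ℱ i γ).map (Module.DirectLimit.of R ι F t i).toAddMonoidHom

end RingDefs

section CommDefs

variable {R : Type} [CommRing R]

/-- Gr-flat: tensoring preserves homogeneous monomorphisms of graded modules. -/
def IsGrFlat (𝒜 : Γ → AddSubgroup R) {F : Type} [AddCommGroup F] [Module R F]
    (ℱ : Γ → AddSubgroup F) : Prop :=
  ∀ (M N : Type) [AddCommGroup M] [Module R M] [AddCommGroup N] [Module R N]
    (ℳ : Γ → AddSubgroup M) (𝒩 : Γ → AddSubgroup N)
    [DirectSum.Decomposition ℳ] [DirectSum.Decomposition 𝒩],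
    SMulClosed 𝒜 ℳ → SMulClosed 𝒜 𝒩 →
    ∀ (f : M →ₗ[R] N), IsHomogeneousHom ℳ 𝒩 f → Function.Injective f →
      Function.Injective (LinearMap.rTensor F f)

end CommDefs

end Defs

section Components

variable {Γ X : Type} [DecidableEq Γ] [AddCommGroup X] (ℬ : Γ → AddSubgroup X) [Decomposition ℬ]

theorem coe_decompose_of_mem {x : X} {i : Γ} (hx : x ∈ ℬ i) (j : Γ) :
    (decompose ℬ x j : X) = if i = j then x else 0 := by
  split_ifs with h
  · exact h ▸ decompose_of_mem_same ℬ hx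
  · exact decompose_of_mem_ne ℬ hx h

theorem mem_of_decompose_eq_zero {x : X} {i : Γ} (h : ∀ j ≠ i, (decompose ℬ x j : X) = 0) :
    x ∈ ℬ i := by
  classical
  have hx : (decompose ℬ x i : X) = x := by
    conv_rhs => rw [← sum_support_decompose ℬ x]
    refine (Finset.sum_eq_single i (fun j _ hj => h j hj) fun hi => ?_).symm
    rw [DFinsupp.notMem_support_iff.mp hi, ZeroMemClass.coe_zero]
  exact hx ▸ SetLike.coe_mem _

end Components

theorem IsHomogeneousHom.coe_decompose_apply {Γ R A B : Type} [DecidableEq Γ] [Ring R]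
    [AddCommGroup A] [Module R A] [AddCommGroup B] [Module R B]
    {𝒶 : Γ → AddSubgroup A} {𝒷 : Γ → AddSubgroup B} [Decomposition 𝒶] [Decomposition 𝒷]
    {φ : A →ₗ[R] B} (hφ : IsHomogeneousHom 𝒶 𝒷 φ) (x : A) (l : Γ) :
    (decompose 𝒷 (φ x) l : B) = φ (decompose 𝒶 x l) := by
  induction x using Decomposition.inductionOn 𝒶 with
  | zero => simp
  | homogeneous x =>
    rw [coe_decompose_of_mem 𝒷 (hφ _ _ x.2), coe_decompose_of_mem 𝒶 x.2]
    split_ifs <;> simp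
  | add x y hx hy =>
    simp only [map_add, decompose_add, DirectSum.add_apply, AddSubgroup.coe_add, hx, hy]

section SMul

variable {Γ R X : Type} [DecidableEq Γ] [AddCancelMonoid Γ] [Ring R] [AddCommGroup X] [Module R X]
  {𝒜 : Γ → AddSubgroup R} {ℬ : Γ → AddSubgroup X} [Decomposition ℬ]

theorem coe_decompose_smul_of_mem_left (hsm : SMulClosed 𝒜 ℬ) {r : R} {i : Γ} (hr : r ∈ 𝒜 i)
    (x : X) (j : Γ) : (decompose ℬ (r • x) (i + j) : X) = r • (decompose ℬ x j : X) := by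
  induction x using Decomposition.inductionOn ℬ with
  | zero => simp
  | homogeneous x =>
    rw [coe_decompose_of_mem ℬ (hsm hr x.2), coe_decompose_of_mem ℬ x.2]
    simp only [add_right_inj]
    split_ifs <;> simp
  | add x y hx hy =>
    simp only [smul_add, decompose_add, DirectSum.add_apply, AddSubgroup.coe_add, hx, hy]

theorem coe_decompose_smul_of_mem_right [Decomposition 𝒜] (hsm : SMulClosed 𝒜 ℬ) {y : X} {γ : Γ}
    (hy : y ∈ ℬ γ) (r : R) (j : Γ) :
    (decompose ℬ (r • y) (j + γ) : X) = (decompose 𝒜 r j : R) • y := by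
  induction r using Decomposition.inductionOn 𝒜 with
  | zero => simp
  | homogeneous r =>
    rw [coe_decompose_of_mem ℬ (hsm r.2 hy), coe_decompose_of_mem 𝒜 r.2]
    simp only [add_left_inj]
    split_ifs <;> simp
  | add r s hr hs =>
    simp only [add_smul, decompose_add, DirectSum.add_apply, AddSubgroup.coe_add, hr, hs]

end SMul

theorem MulClosed.smulClosed {Γ R : Type} [AddCancelMonoid Γ] [Ring R] {𝒜 : Γ → AddSubgroup R}
    (hmul : MulClosed 𝒜) : SMulClosed 𝒜 𝒜 :=
  hmul

theorem MulClosed.one_mem_zero {Γ R : Type} [DecidableEq Γ] [AddCancelMonoid Γ] [Ring R]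
    {𝒜 : Γ → AddSubgroup R} [Decomposition 𝒜] (hmul : MulClosed 𝒜) : (1 : R) ∈ 𝒜 0 := by
  -- For `r ∈ 𝒜 i`, `r * 1ₖ` is the degree-`(i + k)` component of `r = r * 1`.
  have hkill : ∀ k ≠ 0, ∀ r : R, r * (decompose 𝒜 1 k : R) = 0 := by
    intro k hk r
    induction r using Decomposition.inductionOn 𝒜 with
    | zero => simp
    | @homogeneous i r =>
      have h := coe_decompose_smul_of_mem_left hmul.smulClosed r.2 1 k
      rwa [smul_eq_mul, mul_one, decompose_of_mem_ne 𝒜 r.2 (by simpa using hk), eq_comm]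
        at h
    | add r s hr hs => rw [add_mul, hr, hs, add_zero]
  exact mem_of_decompose_eq_zero 𝒜 fun k hk => by simpa using hkill k hk 1

section SubGrading

variable {Γ R M : Type} [Ring R] [AddCommGroup M] [Module R M]

theorem isHomogeneousHom_subtype (ℳ : Γ → AddSubgroup M) (N : Submodule R M) :
    IsHomogeneousHom (subGrading ℳ N) ℳ N.subtype :=
  fun _ _ hx => hx

theorem SMulClosed.subGrading [AddCancelMonoid Γ] {𝒜 : Γ → AddSubgroup R}
    {ℳ : Γ → AddSubgroup M} (hsm : SMulClosed 𝒜 ℳ) (N : Submodule R M) :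
    SMulClosed 𝒜 (subGrading ℳ N) :=
  fun _ _ _ _ ha hx => hsm ha hx

theorem isInternal_subGrading [DecidableEq Γ] (ℳ : Γ → AddSubgroup M) [Decomposition ℳ]
    {N : Submodule R M} (hN : IsGradedSubmodule ℳ N) : IsInternal (subGrading ℳ N) := by
  classical
  constructor
  · let κ : (⨁ i, subGrading ℳ N i) →+ ⨁ i, ℳ i :=
      DirectSum.map fun i => N.subtype.toAddMonoidHom.addSubgroupComap (ℳ i)
    have hκ : (DirectSum.coeAddMonoidHom ℳ).comp κ =
        N.subtype.toAddMonoidHom.comp (DirectSum.coeAddMonoidHom (subGrading ℳ N)) := by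
      ext i x
      rfl
    have hκinj : Function.Injective κ := (map_injective _).mpr fun _ _ _ hxy => by
      have h := congrArg Subtype.val hxy
      exact Subtype.ext (Subtype.ext h)
    intro a b hab
    apply hκinj
    apply (Decomposition.isInternal ℳ).injective
    rw [← AddMonoidHom.comp_apply, ← AddMonoidHom.comp_apply, hκ, AddMonoidHom.comp_apply,
      AddMonoidHom.comp_apply, hab]
  · intro x
    refine ⟨∑ i ∈ (decompose ℳ (x : M)).support,
      of (fun i => subGrading ℳ N i) i ⟨⟨_, hN x x.2 i⟩, (decompose ℳ (x : M) i).2⟩,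
      Subtype.ext ?_⟩
    simpa using sum_support_decompose ℳ (x : M)

end SubGrading

section Shift

variable {Γ X : Type} [AddCancelMonoid Γ] [AddCommGroup X]

def shiftGrading (ℬ : Γ → AddSubgroup X) (α : Γ) : Γ → AddSubgroup X :=
  fun i => ⨆ (j) (_ : j + α = i), ℬ j

theorem shiftGrading_add (ℬ : Γ → AddSubgroup X) (α j : Γ) :
    shiftGrading ℬ α (j + α) = ℬ j :=
  le_antisymm (iSup₂_le fun _ hk => by rw [add_right_cancel hk])
    (le_iSup₂ (f := fun k (_ : k + α = j + α) => ℬ k) j rfl)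

theorem mem_shiftGrading {ℬ : Γ → AddSubgroup X} {α i : Γ} {x : X}
    (hx : x ∈ shiftGrading ℬ α i) : x = 0 ∨ ∃ j, j + α = i ∧ x ∈ ℬ j := by
  by_cases h : ∃ j, j + α = i
  · obtain ⟨j, rfl⟩ := h
    exact Or.inr ⟨j, rfl, shiftGrading_add ℬ α j ▸ hx⟩
  · simp only [not_exists] at h
    have hbot : shiftGrading ℬ α i = ⊥ := iSup₂_eq_bot.mpr fun j hj => absurd hj (h j)
    exact Or.inl (by simpa [hbot] using hx)

theorem SMulClosed.shiftGrading {R : Type} [Ring R] [Module R X] {𝒜 : Γ → AddSubgroup R}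
    {ℬ : Γ → AddSubgroup X} (hsm : SMulClosed 𝒜 ℬ) (α : Γ) :
    SMulClosed 𝒜 (shiftGrading ℬ α) := by
  intro i k a x ha hx
  rcases mem_shiftGrading hx with rfl | ⟨j, rfl, hj⟩
  · rw [smul_zero]
    exact zero_mem _
  · rw [← add_assoc, shiftGrading_add]
    exact hsm ha hj

theorem IsHomogeneousHom.shiftGrading {R Y : Type} [Ring R] [Module R X] [AddCommGroup Y]
    [Module R Y] {ℬ : Γ → AddSubgroup X} {𝒞 : Γ → AddSubgroup Y} {φ : X →ₗ[R] Y}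
    (hφ : IsHomogeneousHom ℬ 𝒞 φ) (α : Γ) :
    IsHomogeneousHom (shiftGrading ℬ α) (shiftGrading 𝒞 α) φ := by
  intro i x hx
  rcases mem_shiftGrading hx with rfl | ⟨j, rfl, hj⟩
  · rw [map_zero]
    exact zero_mem _
  · rw [shiftGrading_add]
    exact hφ j x hj

theorem IsHomogeneousOfDeg.isHomogeneousHom_shiftGrading {R Y : Type} [Ring R] [Module R X]
    [AddCommGroup Y] [Module R Y] {ℬ : Γ → AddSubgroup X} {𝒞 : Γ → AddSubgroup Y} {α : Γ}
    {φ : X →ₗ[R] Y} (hφ : IsHomogeneousOfDeg ℬ 𝒞 α φ) :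
    IsHomogeneousHom (shiftGrading ℬ α) 𝒞 φ := by
  intro i x hx
  rcases mem_shiftGrading hx with rfl | ⟨j, rfl, hj⟩
  · rw [map_zero]
    exact zero_mem _
  · exact hφ j x hj

variable [DecidableEq Γ] (ℬ : Γ → AddSubgroup X) (α : Γ)

noncomputable def shiftHom : (⨁ i, ℬ i) →+ ⨁ i, shiftGrading ℬ α i :=
  toAddMonoid fun j =>
    (of (fun i => shiftGrading ℬ α i) (j + α)).comp
      (AddSubgroup.inclusion (shiftGrading_add ℬ α j).ge)

theorem coeAddMonoidHom_comp_shiftHom :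
    (DirectSum.coeAddMonoidHom (shiftGrading ℬ α)).comp (shiftHom ℬ α) =
      DirectSum.coeAddMonoidHom ℬ := by
  ext j x
  simp [shiftHom]

noncomputable abbrev shiftGrading.decomposition [Decomposition ℬ] :
    Decomposition (shiftGrading ℬ α) where
  decompose' x := shiftHom ℬ α (decompose ℬ x)
  left_inv x := by
    rw [← AddMonoidHom.comp_apply, coeAddMonoidHom_comp_shiftHom]
    exact (decompose ℬ).symm_apply_apply x
  right_inv z := by
    induction z using DirectSum.induction_on with
    | zero => simp
    | of i x =>
      obtain ⟨x, hx⟩ := x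
      rcases mem_shiftGrading hx with rfl | ⟨j, rfl, hj⟩
      · rw [show (⟨0, hx⟩ : shiftGrading ℬ α i) = 0 from rfl]
        simp
      · simp only [DirectSum.coeAddMonoidHom_of, decompose_of_mem ℬ hj, shiftHom, toAddMonoid_of,
          AddMonoidHom.coe_comp, Function.comp_apply]
        rfl
    | add a b ha hb => simp only [map_add, decompose_add, ha, hb]

end Shift

def GrBaer {Γ R : Type} [DecidableEq Γ] [AddCancelMonoid Γ] [Ring R] (𝒜 : Γ → AddSubgroup R)
    [Decomposition 𝒜] {M : Type} [AddCommGroup M] [Module R M] (ℳ : Γ → AddSubgroup M) : Prop :=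
  ∀ (I : Submodule R R), IsGradedSubmodule 𝒜 I →
    ∀ (α : Γ) (f : ↥I →ₗ[R] M), IsHomogeneousOfDeg (subGrading 𝒜 I) ℳ α f →
      ∃ m ∈ ℳ α, ∀ r : ↥I, f r = (r : R) • m

theorem IsGrInjective.grBaer {Γ R : Type} [DecidableEq Γ] [AddCancelMonoid Γ] [Ring R]
    {𝒜 : Γ → AddSubgroup R} [Decomposition 𝒜] (hmul : MulClosed 𝒜)
    {M : Type} [AddCommGroup M] [Module R M] {ℳ : Γ → AddSubgroup M}
    (hinj : IsGrInjective 𝒜 ℳ) : GrBaer 𝒜 ℳ := by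
  intro I hI α f hf
  let _ := (isInternal_subGrading 𝒜 hI).chooseDecomposition
  let _ := shiftGrading.decomposition (subGrading 𝒜 I) α
  let _ := shiftGrading.decomposition 𝒜 α
  obtain ⟨h, hh, hhf⟩ := hinj I R _ _ ((hmul.smulClosed.subGrading I).shiftGrading α)
    (hmul.smulClosed.shiftGrading α) I.subtype ((isHomogeneousHom_subtype 𝒜 I).shiftGrading α)
    I.injective_subtype f hf.isHomogeneousHom_shiftGrading
  refine ⟨h 1, ?_, fun r => ?_⟩
  · simpa using hh (0 + α) 1 (by rw [shiftGrading_add]; exact hmul.one_mem_zero)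
  · calc f r = h r := (LinearMap.congr_fun hhf r).symm
      _ = h ((r : R) • 1) := by rw [smul_eq_mul, mul_one]
      _ = (r : R) • h 1 := map_smul h _ _

section GradedGraph

variable {Γ R B M : Type} [DecidableEq Γ] [Ring R] [AddCommGroup B] [Module R B]
  [AddCommGroup M] [Module R M] (𝒷 : Γ → AddSubgroup B) (ℳ : Γ → AddSubgroup M)
  [Decomposition 𝒷] [Decomposition ℳ]

structure IsGradedGraph (G : Submodule R (B × M)) : Prop where
  snd_eq_zero : ∀ x ∈ G, x.1 = 0 → x.2 = 0
  components_mem : ∀ x ∈ G, ∀ l, ((decompose 𝒷 x.1 l : B), (decompose ℳ x.2 l : M)) ∈ G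

variable {𝒷 ℳ} {G : Submodule R (B × M)}

theorem isGradedGraph_range_prod {A : Type} [AddCommGroup A] [Module R A]
    {𝒶 : Γ → AddSubgroup A} [Decomposition 𝒶] {g : A →ₗ[R] B} {f : A →ₗ[R] M}
    (hg : IsHomogeneousHom 𝒶 𝒷 g) (hg_inj : Function.Injective g)
    (hf : IsHomogeneousHom 𝒶 ℳ f) : IsGradedGraph 𝒷 ℳ (LinearMap.range (g.prod f)) where
  snd_eq_zero := by
    rintro _ ⟨a, rfl⟩ (ha : g a = 0)
    simp [hg_inj (ha.trans (map_zero g).symm)]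
  components_mem := by
    rintro _ ⟨a, rfl⟩ l
    exact ⟨decompose 𝒶 a l, by simp [hg.coe_decompose_apply, hf.coe_decompose_apply]⟩

namespace IsGradedGraph

theorem eq_of_mem (hG : IsGradedGraph 𝒷 ℳ G) {b : B} {m₁ m₂ : M} (h₁ : (b, m₁) ∈ G)
    (h₂ : (b, m₂) ∈ G) : m₁ = m₂ :=
  sub_eq_zero.mp (hG.snd_eq_zero _ (sub_mem h₁ h₂) (sub_self b))

theorem snd_mem_of_fst_mem (hG : IsGradedGraph 𝒷 ℳ G) {b : B} {m : M} {i : Γ} (h : (b, m) ∈ G)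
    (hb : b ∈ 𝒷 i) : m ∈ ℳ i :=
  mem_of_decompose_eq_zero ℳ fun l hl =>
    hG.snd_eq_zero _ (hG.components_mem _ h l) (decompose_of_mem_ne 𝒷 hb (Ne.symm hl))

theorem isGradedSubmodule_map_fst (hG : IsGradedGraph 𝒷 ℳ G) :
    IsGradedSubmodule 𝒷 (G.map (LinearMap.fst R B M)) := by
  rintro _ ⟨x, hx, rfl⟩ l
  exact ⟨_, hG.components_mem x hx l, rfl⟩

theorem sSup_of_isChain {c : Set (Submodule R (B × M))} (hc : ∀ G ∈ c, IsGradedGraph 𝒷 ℳ G)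
    (hchain : IsChain (· ≤ ·) c) (hne : c.Nonempty) : IsGradedGraph 𝒷 ℳ (sSup c) := by
  have hmem (x : B × M) := Submodule.mem_sSup_of_directed (z := x) hne hchain.directedOn
  refine ⟨fun x hx => ?_, fun x hx l => ?_⟩
  · obtain ⟨G, hGc, hxG⟩ := (hmem x).mp hx
    exact (hc G hGc).snd_eq_zero x hxG
  · obtain ⟨G, hGc, hxG⟩ := (hmem x).mp hx
    exact le_sSup hGc ((hc G hGc).components_mem x hxG l)

theorem exists_maximal (hG : IsGradedGraph 𝒷 ℳ G) :
    ∃ G', G ≤ G' ∧ Maximal (IsGradedGraph 𝒷 ℳ) G' :=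
  zorn_le_nonempty₀ {G | IsGradedGraph 𝒷 ℳ G}
    (fun _ hc hchain y hy => ⟨_, sSup_of_isChain hc hchain ⟨y, hy⟩, fun _ => le_sSup⟩) G hG

theorem exists_isHomogeneousHom (hG : IsGradedGraph 𝒷 ℳ G)
    (htop : G.map (LinearMap.fst R B M) = ⊤) :
    ∃ h : B →ₗ[R] M, IsHomogeneousHom 𝒷 ℳ h ∧ ∀ b, (b, h b) ∈ G := by
  let e := LinearEquiv.ofTop _ htop
  have hmem (b : B) : (b, G.toLinearPMap (e.symm b)) ∈ G := by
    simpa [e] using G.mem_graph_toLinearPMap hG.snd_eq_zero (e.symm b)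
  exact ⟨G.toLinearPMap.toFun ∘ₗ e.symm.toLinearMap,
    fun _ b hb => hG.snd_mem_of_fst_mem (hmem b) hb, hmem⟩

end IsGradedGraph

variable [AddCancelMonoid Γ] {𝒜 : Γ → AddSubgroup R} [Decomposition 𝒜]

theorem components_smul_mem_span_singleton (hsB : SMulClosed 𝒜 𝒷) (hsM : SMulClosed 𝒜 ℳ)
    {y : B} {m : M} {γ : Γ} (hy : y ∈ 𝒷 γ) (hm : m ∈ ℳ γ) (r : R) (l : Γ) :
    ((decompose 𝒷 (r • y) l : B), (decompose ℳ (r • m) l : M)) ∈ Submodule.span R {(y, m)} := by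
  induction r using Decomposition.inductionOn 𝒜 with
  | zero =>
    rw [zero_smul, zero_smul, decompose_zero, decompose_zero]
    exact zero_mem _
  | homogeneous r =>
    rw [coe_decompose_of_mem 𝒷 (hsB r.2 hy), coe_decompose_of_mem ℳ (hsM r.2 hm)]
    split_ifs
    · exact Submodule.smul_mem _ _ (Submodule.mem_span_singleton_self _)
    · exact zero_mem _
  | add r s hr hs =>
    simpa only [add_smul, decompose_add, DirectSum.add_apply, AddSubgroup.coe_add,
      Prod.mk_add_mk] using add_mem hr hs

theorem isGradedSubmodule_comap_toSpanSingleton (hsB : SMulClosed 𝒜 𝒷) {D : Submodule R B}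
    (hD : IsGradedSubmodule 𝒷 D) {y : B} {γ : Γ} (hy : y ∈ 𝒷 γ) :
    IsGradedSubmodule 𝒜 (D.comap (LinearMap.toSpanSingleton R B y)) := by
  intro r hr j
  simpa [coe_decompose_smul_of_mem_right hsB hy] using hD _ hr (j + γ)

theorem IsGradedGraph.sup_span_singleton (hG : IsGradedGraph 𝒷 ℳ G) (hsB : SMulClosed 𝒜 𝒷)
    (hsM : SMulClosed 𝒜 ℳ) {y : B} {m : M} {γ : Γ} (hy : y ∈ 𝒷 γ) (hm : m ∈ ℳ γ)
    (hext : ∀ r : R, r • y ∈ G.map (LinearMap.fst R B M) → r • (y, m) ∈ G) :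
    IsGradedGraph 𝒷 ℳ (G ⊔ Submodule.span R {(y, m)}) := by
  constructor
  · intro x hx hx₁
    obtain ⟨v, hv, _, hw, rfl⟩ := Submodule.mem_sup.mp hx
    obtain ⟨r, rfl⟩ := Submodule.mem_span_singleton.mp hw
    have hr : (-r) • y ∈ G.map (LinearMap.fst R B M) :=
      ⟨v, hv, by simpa [neg_smul, eq_neg_iff_add_eq_zero] using hx₁⟩
    have hxG : v + r • (y, m) ∈ G := by
      simpa only [neg_smul, sub_neg_eq_add] using sub_mem hv (hext (-r) hr)
    exact hG.snd_eq_zero _ hxG hx₁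
  · intro x hx l
    obtain ⟨v, hv, _, hw, rfl⟩ := Submodule.mem_sup.mp hx
    obtain ⟨r, rfl⟩ := Submodule.mem_span_singleton.mp hw
    simpa only [Prod.fst_add, Prod.snd_add, Prod.smul_fst, Prod.smul_snd, decompose_add,
      DirectSum.add_apply, AddSubgroup.coe_add, Prod.mk_add_mk] using
      add_mem (Submodule.mem_sup_left (hG.components_mem v hv l))
        (Submodule.mem_sup_right (components_smul_mem_span_singleton hsB hsM hy hm r l))

theorem GrBaer.mem_map_fst_of_maximal (hbaer : GrBaer 𝒜 ℳ) (hsB : SMulClosed 𝒜 𝒷)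
    (hsM : SMulClosed 𝒜 ℳ) (hmax : Maximal (IsGradedGraph 𝒷 ℳ) G) {y : B} {γ : Γ}
    (hy : y ∈ 𝒷 γ) : y ∈ G.map (LinearMap.fst R B M) := by
  have hG := hmax.prop
  let I := (G.map (LinearMap.fst R B M)).comap (LinearMap.toSpanSingleton R B y)
  let f : I →ₗ[R] M := G.toLinearPMap.toFun ∘ₗ (LinearMap.toSpanSingleton R B y).submoduleComap _
  have hfG (r : I) : ((r : R) • y, f r) ∈ G :=
    G.mem_graph_toLinearPMap hG.snd_eq_zero ((LinearMap.toSpanSingleton R B y).submoduleComap _ r)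
  obtain ⟨m, hm, hfm⟩ := hbaer I (isGradedSubmodule_comap_toSpanSingleton hsB
    hG.isGradedSubmodule_map_fst hy) γ f fun _ r hr => hG.snd_mem_of_fst_mem (hfG r) (hsB hr hy)
  have hext := hG.sup_span_singleton hsB hsM hy hm fun r hr => by
    simpa [hfm] using hfG ⟨r, hr⟩
  have hym : (y, m) ∈ G :=
    hmax.eq_of_ge hext le_sup_left ▸ Submodule.mem_sup_right (Submodule.mem_span_singleton_self _)
  exact ⟨_, hym, rfl⟩

end GradedGraph

theorem GrBaer.isGrInjective {Γ R M : Type} [DecidableEq Γ] [AddCancelMonoid Γ] [Ring R]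
    {𝒜 : Γ → AddSubgroup R} [Decomposition 𝒜] [AddCommGroup M] [Module R M]
    {ℳ : Γ → AddSubgroup M} [Decomposition ℳ] (hsM : SMulClosed 𝒜 ℳ) (hbaer : GrBaer 𝒜 ℳ) :
    IsGrInjective 𝒜 ℳ := by
  intro A B _ _ _ _ 𝒶 𝒷 _ _ _ hsB g hg hg_inj f hf
  obtain ⟨G, hG₀, hmax⟩ := (isGradedGraph_range_prod hg hg_inj hf).exists_maximal
  have htop : G.map (LinearMap.fst R B M) = ⊤ := Submodule.eq_top_iff'.mpr <|
    Decomposition.inductionOn 𝒷 (zero_mem _)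
      (fun y => hbaer.mem_map_fst_of_maximal hsB hsM hmax y.2) fun _ _ => add_mem
  obtain ⟨h, hh, hhG⟩ := hmax.prop.exists_isHomogeneousHom htop
  exact ⟨h, hh, LinearMap.ext fun a => hmax.prop.eq_of_mem (hhG (g a)) (hG₀ ⟨a, rfl⟩)⟩

/-- graded version of Baer's criterion. -/
theorem graded_baer {Γ R : Type} [DecidableEq Γ] [AddCancelMonoid Γ] [Ring R]
    (𝒜 : Γ → AddSubgroup R) [DirectSum.Decomposition 𝒜] (hmul : MulClosed 𝒜)
    {M : Type} [AddCommGroup M] [Module R M]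
    (ℳ : Γ → AddSubgroup M) [DirectSum.Decomposition ℳ] (hsm : SMulClosed 𝒜 ℳ) :
    IsGrInjective 𝒜 ℳ ↔
      ∀ (I : Submodule R R), IsGradedSubmodule 𝒜 I →
        ∀ (α : Γ) (f : ↥I →ₗ[R] M), IsHomogeneousOfDeg (subGrading 𝒜 I) ℳ α f →
          ∃ m ∈ ℳ α, ∀ r : ↥I, f r = (r : R) • m :=
  ⟨IsGrInjective.grBaer hmul, GrBaer.isGrInjective hsm⟩

end GradedPaper
end

section
/- Let Γ be a cancellation monoid and N a Γ-graded left R-module. Then N is gr-injective if and only if N admits no proper graded-essential extension. -/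
namespace GradedPaper

open DirectSum

set_option synthInstance.maxHeartbeats 1000000
set_option maxHeartbeats 1000000
set_option linter.unusedSectionVars false

section AuxProj

variable {Γ : Type} [DecidableEq Γ] [AddCancelMonoid Γ] {R : Type} [Ring R]
variable {M : Type} [AddCommGroup M] {N : Type} [AddCommGroup N]

/-- degree-`i` projection as an `AddMonoidHom`. -/
noncomputable def proj (ℳ : Γ → AddSubgroup M) [DirectSum.Decomposition ℳ] (i : Γ) :
    M →+ M :=
  ((ℳ i).subtype.comp (DFinsupp.evalAddMonoidHom i)).comp
    (DirectSum.decomposeAddEquiv ℳ).toAddMonoidHom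

theorem proj_apply (ℳ : Γ → AddSubgroup M) [DirectSum.Decomposition ℳ] (i : Γ) (x : M) :
    proj ℳ i x = (DirectSum.decompose ℳ x i : M) := rfl

theorem proj_mem (ℳ : Γ → AddSubgroup M) [DirectSum.Decomposition ℳ] (i : Γ) (x : M) :
    proj ℳ i x ∈ ℳ i := (DirectSum.decompose ℳ x i).2

theorem proj_of_mem_same (ℳ : Γ → AddSubgroup M) [DirectSum.Decomposition ℳ] {i : Γ} {x : M}
    (hx : x ∈ ℳ i) : proj ℳ i x = x := DirectSum.decompose_of_mem_same ℳ hx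

theorem proj_of_mem_ne (ℳ : Γ → AddSubgroup M) [DirectSum.Decomposition ℳ] {i j : Γ} {x : M}
    (hx : x ∈ ℳ i) (hij : i ≠ j) : proj ℳ j x = 0 := DirectSum.decompose_of_mem_ne ℳ hx hij

theorem proj_comm (ℳ : Γ → AddSubgroup M) (𝒩 : Γ → AddSubgroup N)
    [DirectSum.Decomposition ℳ] [DirectSum.Decomposition 𝒩]
    (f : M →+ N) (hf : ∀ i : Γ, ∀ x ∈ ℳ i, f x ∈ 𝒩 i) (i : Γ) (x : M) :
    proj 𝒩 i (f x) = f (proj ℳ i x) := by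
  classical
  have hx := DirectSum.sum_support_decompose ℳ x
  set s := (DirectSum.decompose ℳ x).support with hs
  have key : ∀ j, proj 𝒩 i (f ((DirectSum.decompose ℳ x j : M))) =
      if j = i then f ((DirectSum.decompose ℳ x j : M)) else 0 := by
    intro j
    by_cases h : j = i
    · subst h
      rw [if_pos rfl, proj_of_mem_same 𝒩 (hf j _ (DirectSum.decompose ℳ x j).2)]
    · rw [if_neg h, proj_of_mem_ne 𝒩 (hf j _ (DirectSum.decompose ℳ x j).2) h]
  calc proj 𝒩 i (f x)
      = proj 𝒩 i (f (∑ j ∈ s, (DirectSum.decompose ℳ x j : M))) := by rw [hx]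
    _ = ∑ j ∈ s, proj 𝒩 i (f ((DirectSum.decompose ℳ x j : M))) := by
        rw [map_sum, map_sum]
    _ = ∑ j ∈ s, if j = i then f ((DirectSum.decompose ℳ x j : M)) else 0 :=
        Finset.sum_congr rfl fun j _ => key j
    _ = if i ∈ s then f ((DirectSum.decompose ℳ x i : M)) else 0 := Finset.sum_ite_eq' s i _
    _ = f (proj ℳ i x) := by
        by_cases h : i ∈ s
        · rw [if_pos h, proj_apply]
        · rw [if_neg h]
          have : DirectSum.decompose ℳ x i = 0 := DFinsupp.notMem_support_iff.mp (by rwa [← hs])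
          rw [proj_apply, this]
          simp

theorem symm_homogeneous {R : Type} [Ring R] [Module R M] [Module R N]
    (ℳ : Γ → AddSubgroup M) (𝒩 : Γ → AddSubgroup N)
    [DirectSum.Decomposition ℳ] [DirectSum.Decomposition 𝒩]
    (e : M ≃ₗ[R] N) (he : ∀ i : Γ, ∀ x ∈ ℳ i, e x ∈ 𝒩 i) :
    ∀ i : Γ, ∀ y ∈ 𝒩 i, e.symm y ∈ ℳ i := by
  intro i y hy
  have h1 : proj 𝒩 i (e.toLinearMap.toAddMonoidHom (e.symm y))
      = e.toLinearMap.toAddMonoidHom (proj ℳ i (e.symm y)) :=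
    proj_comm ℳ 𝒩 e.toLinearMap.toAddMonoidHom he i (e.symm y)
  have h2 : e.toLinearMap.toAddMonoidHom (e.symm y) = y := e.apply_symm_apply y
  rw [h2, proj_of_mem_same 𝒩 hy] at h1
  have h3 : e (proj ℳ i (e.symm y)) = e (e.symm y) := by
    have h2' : e (e.symm y) = y := e.apply_symm_apply y
    rw [h2']
    exact h1.symm
  have h4 := e.injective h3
  rw [← h4]
  exact proj_mem ℳ i _

end AuxProj

section AuxQuot

variable {Γ : Type} [DecidableEq Γ] [AddCancelMonoid Γ] {R : Type} [Ring R]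
variable {M : Type} [AddCommGroup M] [Module R M]

def quotComponent (ℳ : Γ → AddSubgroup M) (U : Submodule R M) (i : Γ) :
    ℳ i →+ quotGrading ℳ U i where
  toFun m := ⟨U.mkQ m, ⟨m, m.2, rfl⟩⟩
  map_zero' := by ext; simp
  map_add' a b := by ext; simp

noncomputable def quotDecomposeAux (ℳ : Γ → AddSubgroup M) [DirectSum.Decomposition ℳ]
    (U : Submodule R M) : M →+ ⨁ i, quotGrading ℳ U i :=
  (DirectSum.toAddMonoid (fun i =>
      (DirectSum.of (fun i => quotGrading ℳ U i) i).comp (quotComponent ℳ U i))).comp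
    (DirectSum.decomposeAddEquiv ℳ).toAddMonoidHom

theorem quotDecomposeAux_coe (ℳ : Γ → AddSubgroup M) [DirectSum.Decomposition ℳ]
    (U : Submodule R M) (x : M) :
    DirectSum.coeAddMonoidHom (quotGrading ℳ U) (quotDecomposeAux ℳ U x) = U.mkQ x := by
  have h : (DirectSum.coeAddMonoidHom (quotGrading ℳ U)).comp
      (DirectSum.toAddMonoid (fun i =>
        (DirectSum.of (fun i => quotGrading ℳ U i) i).comp (quotComponent ℳ U i)))
      = (U.mkQ.toAddMonoidHom).comp (DirectSum.coeAddMonoidHom ℳ) := by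
    refine DirectSum.addHom_ext fun i m => ?_
    simp [quotComponent]
  have h2 := DFunLike.congr_fun h (DirectSum.decompose ℳ x)
  simp only [AddMonoidHom.comp_apply] at h2
  unfold quotDecomposeAux
  rw [AddMonoidHom.comp_apply]
  have h3 : (DirectSum.decomposeAddEquiv ℳ).toAddMonoidHom x = DirectSum.decompose ℳ x := rfl
  rw [h3, h2]
  have h4 : DirectSum.coeAddMonoidHom ℳ (DirectSum.decompose ℳ x)
      = (DirectSum.decompose ℳ).symm (DirectSum.decompose ℳ x) := rfl
  rw [h4, Equiv.symm_apply_apply]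
  rfl

theorem quotDecomposeAux_coe' (ℳ : Γ → AddSubgroup M) [DirectSum.Decomposition ℳ]
    {U : Submodule R M} {i : Γ} {m : M} (hm : m ∈ ℳ i) :
    quotDecomposeAux ℳ U m = DirectSum.of (fun i => quotGrading ℳ U i) i
      ⟨U.mkQ m, ⟨m, hm, rfl⟩⟩ := by
  unfold quotDecomposeAux
  rw [AddMonoidHom.comp_apply]
  have h3 : (DirectSum.decomposeAddEquiv ℳ).toAddMonoidHom m = DirectSum.decompose ℳ m := rfl
  rw [h3, DirectSum.decompose_coe (ℳ := ℳ) ⟨m, hm⟩, DirectSum.toAddMonoid_of]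
  rfl

theorem quotDecomposeAux_eq_zero (ℳ : Γ → AddSubgroup M) [DirectSum.Decomposition ℳ]
    {U : Submodule R M} (hU : ∀ x ∈ U, ∀ i : Γ, (DirectSum.decompose ℳ x i : M) ∈ U)
    {x : M} (hx : x ∈ U) : quotDecomposeAux ℳ U x = 0 := by
  classical
  unfold quotDecomposeAux
  rw [AddMonoidHom.comp_apply]
  have h3 : (DirectSum.decomposeAddEquiv ℳ).toAddMonoidHom x = DirectSum.decompose ℳ x := rfl
  rw [h3, ← DirectSum.sum_support_of (DirectSum.decompose ℳ x), map_sum]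
  refine Finset.sum_eq_zero fun j _ => ?_
  rw [DirectSum.toAddMonoid_of]
  have : quotComponent ℳ U j (DirectSum.decompose ℳ x j) = 0 := by
    ext
    simpa [quotComponent] using (Submodule.Quotient.mk_eq_zero U).mpr (hU x hx j)
  rw [AddMonoidHom.comp_apply, this, map_zero]

noncomputable def qdec (ℳ : Γ → AddSubgroup M) [DirectSum.Decomposition ℳ]
    (U : Submodule R M) (hU : ∀ x ∈ U, ∀ i : Γ, (DirectSum.decompose ℳ x i : M) ∈ U) :
    M ⧸ U → ⨁ i, quotGrading ℳ U i :=
  fun q => Quotient.liftOn' q (quotDecomposeAux ℳ U) (fun a b hab => by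
    have h : a - b ∈ U := (Submodule.quotientRel_def U).mp hab
    have h2 := quotDecomposeAux_eq_zero ℳ hU h
    rw [map_sub, sub_eq_zero] at h2
    exact h2)

theorem qdec_mk (ℳ : Γ → AddSubgroup M) [DirectSum.Decomposition ℳ]
    (U : Submodule R M) (hU : ∀ x ∈ U, ∀ i : Γ, (DirectSum.decompose ℳ x i : M) ∈ U) (x : M) :
    qdec ℳ U hU (U.mkQ x) = quotDecomposeAux ℳ U x := rfl

noncomputable def quotDecomposition (ℳ : Γ → AddSubgroup M) [DirectSum.Decomposition ℳ]
    (U : Submodule R M) (hU : ∀ x ∈ U, ∀ i : Γ, (DirectSum.decompose ℳ x i : M) ∈ U) :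
    DirectSum.Decomposition (quotGrading ℳ U) where
  decompose' := qdec ℳ U hU
  left_inv := fun q => Quotient.inductionOn' q fun x => by
    have hx : Quotient.mk'' x = U.mkQ x := rfl
    rw [hx, qdec_mk, quotDecomposeAux_coe]
  right_inv := fun y => by
    have hadd : ∀ u v : M ⧸ U, qdec ℳ U hU (u + v) = qdec ℳ U hU u + qdec ℳ U hU v := by
      intro u v
      refine Quotient.inductionOn₂' u v fun a b => ?_
      show qdec ℳ U hU (U.mkQ a + U.mkQ b) = qdec ℳ U hU (U.mkQ a) + qdec ℳ U hU (U.mkQ b)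
      rw [← map_add, qdec_mk, qdec_mk, qdec_mk, map_add]
    induction y using DirectSum.induction_on with
    | zero =>
      have h0 : (DirectSum.coeAddMonoidHom (quotGrading ℳ U)) 0 = U.mkQ 0 := by simp
      rw [h0, qdec_mk, map_zero]
    | of i y =>
      obtain ⟨q, hq⟩ := y
      obtain ⟨m, hm, rfl⟩ := hq
      have hcoe : (DirectSum.coeAddMonoidHom (quotGrading ℳ U))
          (DirectSum.of (fun i => quotGrading ℳ U i) i ⟨U.mkQ.toAddMonoidHom m, ⟨m, hm, rfl⟩⟩)
          = U.mkQ m := DirectSum.coeAddMonoidHom_of _ _ _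
      rw [hcoe, qdec_mk]
      exact quotDecomposeAux_coe' ℳ hm
    | add a b ha hb =>
      rw [map_add, hadd, ha, hb]

theorem quotGrading_smulClosed (𝒜 : Γ → AddSubgroup R) (ℳ : Γ → AddSubgroup M)
    (U : Submodule R M) (h : SMulClosed 𝒜 ℳ) : SMulClosed 𝒜 (quotGrading ℳ U) := by
  intro i j a q ha hq
  obtain ⟨m, hm, rfl⟩ := hq
  refine ⟨a • m, h ha hm, ?_⟩
  show U.mkQ (a • m) = a • U.mkQ m
  rw [map_smul]

theorem mkQ_homog (ℳ : Γ → AddSubgroup M) (U : Submodule R M) :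
    ∀ i : Γ, ∀ x ∈ ℳ i, U.mkQ x ∈ quotGrading ℳ U i := fun _ x hx => ⟨x, hx, rfl⟩

end AuxQuot

section AuxProd

variable {Γ : Type} [DecidableEq Γ] [AddCancelMonoid Γ]
variable {M : Type} [AddCommGroup M] {N : Type} [AddCommGroup N]

def prodGrading (𝒩 : Γ → AddSubgroup N) (ℳ : Γ → AddSubgroup M) : Γ → AddSubgroup (N × M) :=
  fun i => (𝒩 i).prod (ℳ i)

def prodInl (𝒩 : Γ → AddSubgroup N) (ℳ : Γ → AddSubgroup M) (i : Γ) :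
    𝒩 i →+ prodGrading 𝒩 ℳ i where
  toFun n := ⟨(n, 0), n.2, zero_mem _⟩
  map_zero' := by ext <;> simp
  map_add' a b := by ext <;> simp

def prodInr (𝒩 : Γ → AddSubgroup N) (ℳ : Γ → AddSubgroup M) (i : Γ) :
    ℳ i →+ prodGrading 𝒩 ℳ i where
  toFun m := ⟨(0, m), zero_mem _, m.2⟩
  map_zero' := by ext <;> simp
  map_add' a b := by ext <;> simp

noncomputable def prodDecomposeAux (𝒩 : Γ → AddSubgroup N) (ℳ : Γ → AddSubgroup M)
    [DirectSum.Decomposition 𝒩] [DirectSum.Decomposition ℳ] :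
    N × M →+ ⨁ i, prodGrading 𝒩 ℳ i :=
  ((DirectSum.toAddMonoid (fun i =>
      (DirectSum.of (fun i => prodGrading 𝒩 ℳ i) i).comp (prodInl 𝒩 ℳ i))).comp
    ((DirectSum.decomposeAddEquiv 𝒩).toAddMonoidHom.comp (AddMonoidHom.fst N M)))
  + ((DirectSum.toAddMonoid (fun i =>
      (DirectSum.of (fun i => prodGrading 𝒩 ℳ i) i).comp (prodInr 𝒩 ℳ i))).comp
    ((DirectSum.decomposeAddEquiv ℳ).toAddMonoidHom.comp (AddMonoidHom.snd N M)))

theorem prodDecomposeAux_coe (𝒩 : Γ → AddSubgroup N) (ℳ : Γ → AddSubgroup M)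
    [DirectSum.Decomposition 𝒩] [DirectSum.Decomposition ℳ] (p : N × M) :
    DirectSum.coeAddMonoidHom (prodGrading 𝒩 ℳ) (prodDecomposeAux 𝒩 ℳ p) = p := by
  have hl : (DirectSum.coeAddMonoidHom (prodGrading 𝒩 ℳ)).comp
      (DirectSum.toAddMonoid (fun i =>
        (DirectSum.of (fun i => prodGrading 𝒩 ℳ i) i).comp (prodInl 𝒩 ℳ i)))
      = (AddMonoidHom.inl N M).comp (DirectSum.coeAddMonoidHom 𝒩) := by
    refine DirectSum.addHom_ext fun i m => ?_
    simp [prodInl]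
  have hr : (DirectSum.coeAddMonoidHom (prodGrading 𝒩 ℳ)).comp
      (DirectSum.toAddMonoid (fun i =>
        (DirectSum.of (fun i => prodGrading 𝒩 ℳ i) i).comp (prodInr 𝒩 ℳ i)))
      = (AddMonoidHom.inr N M).comp (DirectSum.coeAddMonoidHom ℳ) := by
    refine DirectSum.addHom_ext fun i m => ?_
    simp [prodInr]
  unfold prodDecomposeAux
  rw [AddMonoidHom.add_apply, map_add]
  simp only [AddMonoidHom.comp_apply]
  have e1 := DFunLike.congr_fun hl (DirectSum.decompose 𝒩 p.1)
  have e2 := DFunLike.congr_fun hr (DirectSum.decompose ℳ p.2)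
  simp only [AddMonoidHom.comp_apply] at e1 e2
  have c1 : DirectSum.coeAddMonoidHom 𝒩 (DirectSum.decompose 𝒩 p.1) = p.1 :=
    (DirectSum.decompose 𝒩).symm_apply_apply p.1
  have c2 : DirectSum.coeAddMonoidHom ℳ (DirectSum.decompose ℳ p.2) = p.2 :=
    (DirectSum.decompose ℳ).symm_apply_apply p.2
  have g1 : (DirectSum.decomposeAddEquiv 𝒩).toAddMonoidHom ((AddMonoidHom.fst N M) p)
      = DirectSum.decompose 𝒩 p.1 := rfl
  have g2 : (DirectSum.decomposeAddEquiv ℳ).toAddMonoidHom ((AddMonoidHom.snd N M) p)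
      = DirectSum.decompose ℳ p.2 := rfl
  rw [g1, g2, e1, e2, c1, c2]
  ext <;> simp

theorem prodDecomposeAux_of (𝒩 : Γ → AddSubgroup N) (ℳ : Γ → AddSubgroup M)
    [DirectSum.Decomposition 𝒩] [DirectSum.Decomposition ℳ] {i : Γ} {n : N} {m : M}
    (hn : n ∈ 𝒩 i) (hm : m ∈ ℳ i) :
    prodDecomposeAux 𝒩 ℳ (n, m)
      = DirectSum.of (fun i => prodGrading 𝒩 ℳ i) i ⟨(n, m), hn, hm⟩ := by
  unfold prodDecomposeAux
  rw [AddMonoidHom.add_apply]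
  simp only [AddMonoidHom.comp_apply]
  have g1 : (DirectSum.decomposeAddEquiv 𝒩).toAddMonoidHom ((AddMonoidHom.fst N M) (n, m))
      = DirectSum.decompose 𝒩 n := rfl
  have g2 : (DirectSum.decomposeAddEquiv ℳ).toAddMonoidHom ((AddMonoidHom.snd N M) (n, m))
      = DirectSum.decompose ℳ m := rfl
  rw [g1, g2, DirectSum.decompose_coe (ℳ := 𝒩) ⟨n, hn⟩, DirectSum.decompose_coe (ℳ := ℳ) ⟨m, hm⟩,
    DirectSum.toAddMonoid_of, DirectSum.toAddMonoid_of]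
  simp only [AddMonoidHom.comp_apply]
  rw [← map_add]
  congr 1
  ext <;> simp [prodInl, prodInr]

noncomputable def prodDecomposition (𝒩 : Γ → AddSubgroup N) (ℳ : Γ → AddSubgroup M)
    [DirectSum.Decomposition 𝒩] [DirectSum.Decomposition ℳ] :
    DirectSum.Decomposition (prodGrading 𝒩 ℳ) where
  decompose' := prodDecomposeAux 𝒩 ℳ
  left_inv := prodDecomposeAux_coe 𝒩 ℳ
  right_inv := fun y => by
    induction y using DirectSum.induction_on with
    | zero => rw [map_zero, map_zero]
    | of i y =>
      obtain ⟨⟨n, m⟩, hn, hm⟩ := y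
      have hcoe : (DirectSum.coeAddMonoidHom (prodGrading 𝒩 ℳ))
          (DirectSum.of (fun i => prodGrading 𝒩 ℳ i) i ⟨(n, m), hn, hm⟩) = (n, m) :=
        DirectSum.coeAddMonoidHom_of _ _ _
      rw [hcoe]
      exact prodDecomposeAux_of 𝒩 ℳ hn hm
    | add a b ha hb => rw [map_add, map_add, ha, hb]

theorem prodGrading_proj (𝒩 : Γ → AddSubgroup N) (ℳ : Γ → AddSubgroup M)
    [DirectSum.Decomposition 𝒩] [DirectSum.Decomposition ℳ] (i : Γ) (p : N × M) :
    letI := prodDecomposition 𝒩 ℳ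
    proj (prodGrading 𝒩 ℳ) i p = (proj 𝒩 i p.1, proj ℳ i p.2) := by
  letI := prodDecomposition 𝒩 ℳ
  have h1 : proj 𝒩 i ((AddMonoidHom.fst N M) p)
      = (AddMonoidHom.fst N M) (proj (prodGrading 𝒩 ℳ) i p) :=
    proj_comm (prodGrading 𝒩 ℳ) 𝒩 (AddMonoidHom.fst N M) (fun _ _ hx => hx.1) i p
  have h2 : proj ℳ i ((AddMonoidHom.snd N M) p)
      = (AddMonoidHom.snd N M) (proj (prodGrading 𝒩 ℳ) i p) :=
    proj_comm (prodGrading 𝒩 ℳ) ℳ (AddMonoidHom.snd N M) (fun _ _ hx => hx.2) i p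
  exact Prod.ext h1.symm h2.symm

end AuxProd

section Stmt7

variable {Γ : Type} [DecidableEq Γ] [AddCancelMonoid Γ] {R : Type} [Ring R]

/-- A proper graded-essential extension of the graded module `N`. -/
structure ProperGrEssentialExt (𝒜 : Γ → AddSubgroup R) {N : Type} [AddCommGroup N]
    [Module R N] (𝒩 : Γ → AddSubgroup N) where
  carrier : Type
  [acg : AddCommGroup carrier]
  [mod : Module R carrier]
  grading : Γ → AddSubgroup carrier
  [dec : DirectSum.Decomposition grading]
  smul : SMulClosed 𝒜 grading
  emb : N →ₗ[R] carrier
  emb_inj : Function.Injective emb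
  emb_hom : IsHomogeneousHom 𝒩 grading emb
  proper : LinearMap.range emb ≠ ⊤
  essential : ∀ U : Submodule R carrier, IsGradedSubmodule grading U → U ≠ ⊥ →
    U ⊓ LinearMap.range emb ≠ ⊥

/-- `N` is gr-injective iff it has no proper graded-essential extension. -/
theorem grInjective_iff_no_proper_essential (𝒜 : Γ → AddSubgroup R)
    [DirectSum.Decomposition 𝒜] (hmul : MulClosed 𝒜)
    {N : Type} [AddCommGroup N] [Module R N]
    (𝒩 : Γ → AddSubgroup N) [DirectSum.Decomposition 𝒩] (hsm : SMulClosed 𝒜 𝒩) :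
    IsGrInjective 𝒜 𝒩 ↔ ¬ Nonempty (ProperGrEssentialExt 𝒜 𝒩) := by
  constructor
  · rintro hinj ⟨ext⟩
    letI := ext.acg
    letI := ext.mod
    letI := ext.dec
    obtain ⟨h, hhom, hcomp⟩ := hinj N ext.carrier 𝒩 ext.grading hsm ext.smul ext.emb
      ext.emb_hom ext.emb_inj LinearMap.id (fun i x hx => hx)
    have hcomp' : ∀ n : N, h (ext.emb n) = n := fun n => by
      have := DFunLike.congr_fun hcomp n
      simpa using this
    have hker : IsGradedSubmodule ext.grading (LinearMap.ker h) := by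
      intro x hx i
      have hc := proj_comm ext.grading 𝒩 h.toAddMonoidHom hhom i x
      have hx0 : h x = 0 := hx
      have : h (proj ext.grading i x) = 0 := by
        have hl : h.toAddMonoidHom x = (0 : N) := hx0
        have : proj 𝒩 i (h.toAddMonoidHom x) = 0 := by rw [hl, map_zero]
        rw [hc] at this
        exact this
      rw [← proj_apply]
      exact this
    have hdisj : LinearMap.ker h ⊓ LinearMap.range ext.emb = ⊥ := by
      apply (Submodule.eq_bot_iff _).mpr
      intro x hx
      obtain ⟨hk, n, rfl⟩ := Submodule.mem_inf.mp hx
      have hn : n = 0 := by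
        have hk' : h (ext.emb n) = 0 := hk
        rw [hcomp' n] at hk'
        exact hk'
      rw [hn, map_zero]
    have hkbot : LinearMap.ker h = ⊥ := by
      by_contra hne
      exact ext.essential _ hker hne hdisj
    apply ext.proper
    apply Submodule.eq_top_iff'.mpr
    intro m
    have h1 : h (m - ext.emb (h m)) = 0 := by
      rw [map_sub, hcomp', sub_self]
    have h2 : m - ext.emb (h m) = 0 := by
      have := (LinearMap.mem_ker (f := h)).mpr h1
      rw [hkbot, Submodule.mem_bot] at this
      exact this
    exact ⟨h m, (sub_eq_zero.mp h2).symm⟩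
  · intro hno
    intro M₀ W _ _ _ _ ℳ₀ 𝒲 _ _ hsmM hsmW g hg hginj f hf
    classical
    -- the pushout of f and g
    letI instP : DirectSum.Decomposition (prodGrading 𝒩 𝒲) := prodDecomposition 𝒩 𝒲
    have hHg : IsGradedSubmodule (prodGrading 𝒩 𝒲)
        (LinearMap.range (LinearMap.prod f (-g))) := by
      rintro x hx i
      obtain ⟨m, rfl⟩ := hx
      rw [← proj_apply]
      have hp : LinearMap.prod f (-g) m = (f m, -(g m)) := rfl
      rw [hp, prodGrading_proj]
      refine ⟨proj ℳ₀ i m, ?_⟩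
      have e1 : proj 𝒩 i (f m) = f (proj ℳ₀ i m) :=
        proj_comm ℳ₀ 𝒩 f.toAddMonoidHom hf i m
      have e2 : proj 𝒲 i (g m) = g (proj ℳ₀ i m) :=
        proj_comm ℳ₀ 𝒲 g.toAddMonoidHom hg i m
      have e3 : proj 𝒲 i (-(g m)) = -(g (proj ℳ₀ i m)) := by rw [map_neg, e2]
      show LinearMap.prod f (-g) (proj ℳ₀ i m) = _
      have hp2 : LinearMap.prod f (-g) (proj ℳ₀ i m)
          = (f (proj ℳ₀ i m), -(g (proj ℳ₀ i m))) := rfl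
      rw [hp2, e1, e3]
    set H : Submodule R (N × W) := LinearMap.range (LinearMap.prod f (-g)) with hH
    letI instPq : DirectSum.Decomposition (quotGrading (prodGrading 𝒩 𝒲) H) :=
      quotDecomposition (prodGrading 𝒩 𝒲) H hHg
    set ιN : N →ₗ[R] (N × W) ⧸ H := H.mkQ ∘ₗ LinearMap.inl R N W with hιN
    set ιW : W →ₗ[R] (N × W) ⧸ H := H.mkQ ∘ₗ LinearMap.inr R N W with hιW
    have hιNhom : ∀ i : Γ, ∀ n ∈ 𝒩 i, ιN n ∈ quotGrading (prodGrading 𝒩 𝒲) H i := by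
      intro i n hn
      exact ⟨(n, 0), ⟨hn, zero_mem _⟩, rfl⟩
    have hιWhom : ∀ i : Γ, ∀ w ∈ 𝒲 i, ιW w ∈ quotGrading (prodGrading 𝒩 𝒲) H i := by
      intro i w hw
      exact ⟨(0, w), ⟨zero_mem _, hw⟩, rfl⟩
    have hιNinj : Function.Injective ιN := by
      intro a b hab
      rw [← sub_eq_zero] at hab ⊢
      rw [← map_sub] at hab
      have hmem : ((a - b : N), (0 : W)) ∈ H := by
        rw [← Submodule.Quotient.mk_eq_zero H]
        exact hab
      obtain ⟨m, hm⟩ := hmem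
      have hm1 : f m = a - b := congrArg Prod.fst hm
      have hm2 : -(g m) = 0 := congrArg Prod.snd hm
      have hm0 : m = 0 := by
        apply hginj
        rw [map_zero, ← neg_eq_zero]
        exact hm2
      rw [← hm1, hm0, map_zero]
    have hcommute : ∀ m : M₀, ιN (f m) = ιW (g m) := by
      intro m
      rw [← sub_eq_zero]
      have hc : ιN (f m) - ιW (g m) = H.mkQ (f m, -(g m)) := by
        rw [hιN, hιW]
        simp only [LinearMap.comp_apply, ← map_sub]
        congr 1
        ext <;> simp
      rw [hc]
      rw [Submodule.mkQ_apply, Submodule.Quotient.mk_eq_zero]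
      exact ⟨m, rfl⟩
    -- Zorn's lemma: a maximal graded submodule avoiding the image of N
    set imN := LinearMap.range ιN with himN
    set S : Set (Submodule R ((N × W) ⧸ H)) :=
      {U | IsGradedSubmodule (quotGrading (prodGrading 𝒩 𝒲) H) U ∧ U ⊓ imN = ⊥} with hS
    have hbot : (⊥ : Submodule R ((N × W) ⧸ H)) ∈ S := by
      constructor
      · intro x hx i
        rw [Submodule.mem_bot] at hx
        subst hx
        rw [← proj_apply, map_zero]
        exact Submodule.zero_mem _
      · rw [bot_inf_eq]
    obtain ⟨U, -, hUS, hUmax⟩ := zorn_le_nonempty₀ S (by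
      intro c hcS hchain y hy
      refine ⟨sSup c, ⟨?_, ?_⟩, fun z hz => le_sSup hz⟩
      · intro x hx i
        obtain ⟨V, hVc, hxV⟩ :=
          (Submodule.mem_sSup_of_directed ⟨y, hy⟩ hchain.directedOn).mp hx
        exact le_sSup hVc ((hcS hVc).1 x hxV i)
      · apply (Submodule.eq_bot_iff _).mpr
        intro x hx
        obtain ⟨h1, h2⟩ := Submodule.mem_inf.mp hx
        obtain ⟨V, hVc, hxV⟩ :=
          (Submodule.mem_sSup_of_directed ⟨y, hy⟩ hchain.directedOn).mp h1
        have hxm : x ∈ V ⊓ imN := Submodule.mem_inf.mpr ⟨hxV, h2⟩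
        rw [(hcS hVc).2] at hxm
        exact (Submodule.mem_bot _).mp hxm) ⊥ hbot
    have hUg : IsGradedSubmodule (quotGrading (prodGrading 𝒩 𝒲) H) U := hUS.1
    have hUdisj : U ⊓ imN = ⊥ := hUS.2
    letI instQ : DirectSum.Decomposition
        (quotGrading (quotGrading (prodGrading 𝒩 𝒲) H) U) :=
      quotDecomposition _ U hUg
    set ι : N →ₗ[R] ((N × W) ⧸ H) ⧸ U := U.mkQ ∘ₗ ιN with hι
    have hιhom : IsHomogeneousHom 𝒩
        (quotGrading (quotGrading (prodGrading 𝒩 𝒲) H) U) ι :=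
      fun i n hn => ⟨ιN n, hιNhom i n hn, rfl⟩
    have hιinj : Function.Injective ι := by
      intro a b hab
      have h0 : ι (a - b) = 0 := by rw [map_sub, hab, sub_self]
      have h1 : ιN (a - b) ∈ U := by
        have h2 : U.mkQ (ιN (a - b)) = 0 := h0
        rwa [Submodule.mkQ_apply, Submodule.Quotient.mk_eq_zero] at h2
      have h3 : ιN (a - b) ∈ U ⊓ imN := Submodule.mem_inf.mpr ⟨h1, ⟨a - b, rfl⟩⟩
      rw [hUdisj, Submodule.mem_bot] at h3
      have h4 : a - b = 0 := by
        apply hιNinj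
        rw [h3, map_zero]
      exact sub_eq_zero.mp h4
    -- smul closures
    have hsmP : SMulClosed 𝒜 (prodGrading 𝒩 𝒲) := by
      intro i j a p ha hp
      exact ⟨hsm ha hp.1, hsmW ha hp.2⟩
    have hsmPq : SMulClosed 𝒜 (quotGrading (prodGrading 𝒩 𝒲) H) :=
      quotGrading_smulClosed 𝒜 _ H hsmP
    have hsmQ : SMulClosed 𝒜 (quotGrading (quotGrading (prodGrading 𝒩 𝒲) H) U) :=
      quotGrading_smulClosed 𝒜 _ U hsmPq
    -- surjectivity of ι via the no-proper-essential-extension hypothesis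
    have hsurj : Function.Surjective ι := by
      by_contra hns
      have hproper : LinearMap.range ι ≠ ⊤ := fun htop =>
        hns (LinearMap.range_eq_top.mp htop)
      refine hno ⟨{ carrier := ((N × W) ⧸ H) ⧸ U
                    grading := quotGrading (quotGrading (prodGrading 𝒩 𝒲) H) U
                    smul := hsmQ
                    emb := ι
                    emb_inj := hιinj
                    emb_hom := hιhom
                    proper := hproper
                    essential := ?_ }⟩
      intro V' hV'g hV'ne hcontra
      set V : Submodule R ((N × W) ⧸ H) := Submodule.comap U.mkQ V' with hV
      have hUV : U ≤ V := by
        intro x hx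
        show U.mkQ x ∈ V'
        have hx0 : U.mkQ x = 0 := by
          rw [Submodule.mkQ_apply, Submodule.Quotient.mk_eq_zero]
          exact hx
        rw [hx0]
        exact V'.zero_mem
      have hVg : IsGradedSubmodule (quotGrading (prodGrading 𝒩 𝒲) H) V := by
        intro x hx i
        show (DirectSum.decompose (quotGrading (prodGrading 𝒩 𝒲) H) x i
          : (N × W) ⧸ H) ∈ V
        show U.mkQ ((DirectSum.decompose (quotGrading (prodGrading 𝒩 𝒲) H) x i
          : (N × W) ⧸ H)) ∈ V'
        have hc : proj (quotGrading (quotGrading (prodGrading 𝒩 𝒲) H) U) i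
            (U.mkQ.toAddMonoidHom x)
            = U.mkQ.toAddMonoidHom (proj (quotGrading (prodGrading 𝒩 𝒲) H) i x) :=
          proj_comm _ _ U.mkQ.toAddMonoidHom (mkQ_homog _ U) i x
        rw [← proj_apply]
        show U.mkQ.toAddMonoidHom (proj (quotGrading (prodGrading 𝒩 𝒲) H) i x) ∈ V'
        rw [← hc, proj_apply]
        exact hV'g (U.mkQ x) hx i
      have hVint : V ⊓ imN ≠ ⊥ := by
        intro hb
        have hVS : V ∈ S := ⟨hVg, hb⟩
        have hVU : V = U := le_antisymm (hUmax hVS hUV) hUV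
        apply hV'ne
        have hmapV : Submodule.map U.mkQ V = V' :=
          Submodule.map_comap_eq_of_surjective (Submodule.mkQ_surjective U) V'
        rw [← hmapV, hVU]
        apply (Submodule.eq_bot_iff _).mpr
        intro y hy
        obtain ⟨u, hu, rfl⟩ := hy
        rw [Submodule.mkQ_apply, Submodule.Quotient.mk_eq_zero]
        exact hu
      obtain ⟨p, hpmem, hpne⟩ := Submodule.exists_mem_ne_zero_of_ne_bot hVint
      obtain ⟨hpV, n, rfl⟩ := Submodule.mem_inf.mp hpmem
      have hnU : ιN n ∉ U := by
        intro hin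
        apply hpne
        have : ιN n ∈ U ⊓ imN := Submodule.mem_inf.mpr ⟨hin, ⟨n, rfl⟩⟩
        rw [hUdisj, Submodule.mem_bot] at this
        exact this
      apply hnU
      have hmk0 : U.mkQ (ιN n) ∈ V' ⊓ LinearMap.range ι :=
        Submodule.mem_inf.mpr ⟨hpV, ⟨n, rfl⟩⟩
      rw [hcontra, Submodule.mem_bot] at hmk0
      rw [← Submodule.Quotient.mk_eq_zero, ← Submodule.mkQ_apply]
      exact hmk0
    -- build the retraction
    set e : N ≃ₗ[R] (((N × W) ⧸ H) ⧸ U) := LinearEquiv.ofBijective ι ⟨hιinj, hsurj⟩ with he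
    have heapp : ∀ n : N, e n = ι n := fun n => rfl
    have hehom : ∀ i : Γ, ∀ x ∈ 𝒩 i, e x ∈
        quotGrading (quotGrading (prodGrading 𝒩 𝒲) H) U i := by
      intro i x hx
      rw [heapp]
      exact hιhom i x hx
    have hsym := symm_homogeneous 𝒩 (quotGrading (quotGrading (prodGrading 𝒩 𝒲) H) U) e hehom
    refine ⟨e.symm.toLinearMap ∘ₗ (U.mkQ ∘ₗ ιW), ?_, ?_⟩
    · intro i w hw
      apply hsym
      exact ⟨ιW w, hιWhom i w hw, rfl⟩
    · apply LinearMap.ext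
      intro m
      show e.symm (U.mkQ (ιW (g m))) = f m
      rw [← hcommute m]
      have h5 : U.mkQ (ιN (f m)) = e (f m) := (heapp (f m)).symm
      rw [h5, e.symm_apply_apply]

end Stmt7

end GradedPaper
end
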